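/- The long-term success probability of non-persistent users, φ_0 := ∑_{w legitimate} θ(busy(w)) · p(w), satisfies φ_0 = B · ∑_{y=0}^{m} ∑_{b=0}^{min(y,n)} (ρ^{y−b}/(y−b)!) · (∏_{r=0}^{y} θ(r)) · c_b, where ρ = ∑_{i=1}^k ρ_i and c_b = ∑_{a ∈ {I,W,T}^n : #{j : a_j=T} = b} ∏_{j=1}^n (α_j/β_j)^{[a_j=W]} (α_j u_j/(β_j v_j))^{[a_j=T]}. -/

import Mathlib

/-- Activity state of a persistent user: Idle, Waiting, or Transmitting. -/
inductive Act : Type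
  | I : Act
  | W : Act
  | T : Act
deriving DecidableEq

instance : Fintype Act where
  elems := {Act.I, Act.W, Act.T}
  complete := by intro x; cases x <;> simp

/-- Number of persistent users that are transmitting. -/
def busyP {n : ℕ} (a : Fin n → Act) : ℕ :=
  (Finset.univ.filter (fun j => a j = Act.T)).card

/-- The factor `(α/β)^{[a=W]} (αu/(βv))^{[a=T]}` contributed by one persistent user. -/
noncomputable def fac (α β u v : ℝ) : Act → ℝ
  | Act.I => 1
  | Act.W => α / β
  | Act.T => α * u / (β * v)

/-! Group the legitimate states by the persistent part `a`, with `b = busy(a)`, and by the total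
number `y` of busy channels. The non-persistent part `x` then ranges over the tuples with
`∑ x = y - b`, on which `θ(busy) ∏_{r<busy} θ(r) = ∏_{r≤y} θ(r)` is constant, and the multinomial
theorem sums `∏ ρ_i^{x_i}/x_i!` to `ρ^{y-b}/(y-b)!`. Collecting the `a` with `busy(a) = b`
produces `c_b`. -/

open Finset

section

variable {K : Type*} [Field K] [CharZero K]

theorem sum_antidiagonalTuple_prod_pow_div_factorial {k : ℕ} (ρ : Fin k → K) (y : ℕ) :
    ∑ x ∈ Nat.antidiagonalTuple k y, ∏ i, ρ i ^ x i / (x i).factorial =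
      (∑ i, ρ i) ^ y / y.factorial := by
  rw [← piAntidiag_univ_fin_eq_antidiagonalTuple, sum_pow_eq_sum_piAntidiag, sum_div]
  refine sum_congr rfl fun x hx => ?_
  have hsum : ∑ i, x i = y := by simpa using (mem_piAntidiag.mp hx).1
  have hspec := Nat.multinomial_spec univ x
  rw [hsum] at hspec
  have hfact : (y.factorial : K) ≠ 0 := Nat.cast_ne_zero.mpr y.factorial_ne_zero
  rw [prod_div_distrib, eq_div_iff hfact, ← hspec]
  push_cast
  have hprod : (∏ i, ((x i).factorial : K)) ≠ 0 :=
    prod_ne_zero_iff.mpr fun i _ => Nat.cast_ne_zero.mpr (x i).factorial_ne_zero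
  field_simp

theorem sum_range_sub_sum_antidiagonalTuple_eq_sum_Icc (θ : ℕ → K) {k : ℕ} (ρ : Fin k → K) (m b : ℕ) :
    ∑ t ∈ range (m + 1 - b), ∑ x ∈ Nat.antidiagonalTuple k t,
        θ (∑ i, x i + b) * (∏ r ∈ range (∑ i, x i + b), θ r) *
          ∏ i, ρ i ^ x i / (x i).factorial =
      ∑ y ∈ Icc b m, (∑ i, ρ i) ^ (y - b) / (y - b).factorial * ∏ r ∈ range (y + 1), θ r := by
  rw [← Ico_add_one_right_eq_Icc, sum_Ico_eq_sum_range]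
  refine sum_congr rfl fun t _ => ?_
  have hterm : ∀ x ∈ Nat.antidiagonalTuple k t,
      θ (∑ i, x i + b) * (∏ r ∈ range (∑ i, x i + b), θ r) *
          ∏ i, ρ i ^ x i / (x i).factorial =
        (∏ r ∈ range (t + b + 1), θ r) * ∏ i, ρ i ^ x i / (x i).factorial := by
    intro x hx
    rw [Nat.mem_antidiagonalTuple.mp hx, prod_range_succ, mul_comm (θ _)]
  rw [sum_congr rfl hterm, ← mul_sum, sum_antidiagonalTuple_prod_pow_div_factorial,
    Nat.add_sub_cancel_left, add_comm t b]
  ring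

end

theorem sum_sum_Icc_eq_sum_sum_fiberwise {R ι : Type*} [CommSemiring R] [Fintype ι]
    (s : ι → ℕ) {n : ℕ} (hs : ∀ a, s a ≤ n) (m : ℕ) (G : ℕ → ℕ → R) (F : ι → R) :
    ∑ a, F a * ∑ y ∈ Icc (s a) m, G y (s a) =
      ∑ y ∈ range (m + 1), ∑ b ∈ range (min y n + 1), G y b * ∑ a with s a = b, F a := by
  classical
  have hfiber : ∀ y, ∑ b ∈ range (min y n + 1), G y b * ∑ a with s a = b, F a =
      ∑ a with s a ≤ y, G y (s a) * F a := by
    intro y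
    have hrange : ∀ a, s a ∈ range (min y n + 1) ↔ s a ≤ y := fun a => by
      simpa [Nat.lt_succ_iff] using fun _ => hs a
    rw [← filter_congr fun a _ => hrange a, ← sum_fiberwise_eq_sum_filter]
    refine sum_congr rfl fun b _ => ?_
    rw [mul_sum]
    exact sum_congr rfl fun a ha => by rw [(mem_filter.mp ha).2]
  simp_rw [hfiber, sum_filter, mul_sum]
  rw [sum_comm]
  refine sum_congr rfl fun a _ => ?_
  rw [← sum_filter]
  refine sum_congr (by ext y; simp [and_comm]) fun y _ => mul_comm _ _

theorem busyP_le {n : ℕ} (a : Fin n → Act) : busyP a ≤ n :=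
  (card_filter_le _ _).trans_eq (card_fin n)

theorem success_probability_nonpersistent_users_general
    (m k n : ℕ)
    (θ : ℕ → ℝ)
    (α β u v : Fin n → ℝ)
    (ρ : Fin k → ℝ)
    (B : ℝ)
    (p : (Fin k → ℕ) → (Fin n → Act) → ℝ)
    (hp : ∀ (x : Fin k → ℕ) (a : Fin n → Act),
      p x a = B * (∏ r ∈ Finset.range (∑ i, x i + busyP a), θ r) *
        (∏ i, ρ i ^ (x i) / (x i).factorial) *
        ∏ j, fac (α j) (β j) (u j) (v j) (a j))
    (c : ℕ → ℝ)
    (hc : ∀ b, c b = ∑ a ∈ Finset.univ.filter (fun a : Fin n → Act => busyP a = b),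
      ∏ j, fac (α j) (β j) (u j) (v j) (a j))
    (φ₀ : ℝ)
    (hφ₀ : φ₀ = ∑ a : Fin n → Act, ∑ xt ∈ Finset.range (m + 1 - busyP a),
      ∑ x ∈ Finset.Nat.antidiagonalTuple k xt, θ (∑ i, x i + busyP a) * p x a) :
    φ₀ = B * ∑ y ∈ Finset.range (m + 1), ∑ b ∈ Finset.range (min y n + 1),
      (∑ i, ρ i) ^ (y - b) / (y - b).factorial *
        (∏ r ∈ Finset.range (y + 1), θ r) * c b := by
  have hterm : ∀ x a, θ (∑ i, x i + busyP a) * p x a =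
      B * (∏ j, fac (α j) (β j) (u j) (v j) (a j)) *
        (θ (∑ i, x i + busyP a) * (∏ r ∈ range (∑ i, x i + busyP a), θ r) *
          ∏ i, ρ i ^ x i / (x i).factorial) := by
    intro x a
    rw [hp]
    ring
  simp_rw [hφ₀, hterm, ← mul_sum, sum_range_sub_sum_antidiagonalTuple_eq_sum_Icc, hc]
  rw [← sum_sum_Icc_eq_sum_sum_fiberwise busyP busyP_le, mul_sum]
  simp_rw [mul_assoc]

/-- the long-term success probability of non-persistent users,
`φ₀ = ∑_{w legitimate} θ(busy(w)) p(w)`, equals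
`B ∑_{y=0}^m ∑_{b=0}^{min(y,n)} (ρ^{y-b}/(y-b)!) (∏_{r=0}^{y} θ(r)) c_b`. -/
theorem success_probability_nonpersistent_users
    (m k n : ℕ) (hm : 0 < m) (hk : 0 < k) (hn : 0 < n)
    (θ : ℕ → ℝ)
    (hθ1 : ∀ b ≤ m, 0 ≤ θ b ∧ θ b ≤ 1)
    (hθ2 : ∀ b < m, 0 < θ b)
    (hθ3 : θ m = 0)
    (lam μ : Fin k → ℝ) (hlam : ∀ i, 0 < lam i) (hμ : ∀ i, 0 < μ i)
    (α β u v : Fin n → ℝ)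
    (hα : ∀ j, 0 < α j) (hβ : ∀ j, 0 < β j) (hu : ∀ j, 0 < u j) (hv : ∀ j, 0 < v j)
    (ρ : Fin k → ℝ) (hρ : ∀ i, ρ i = lam i / μ i)
    (B : ℝ) (hB : 0 < B)
    (p : (Fin k → ℕ) → (Fin n → Act) → ℝ)
    (hp : ∀ (x : Fin k → ℕ) (a : Fin n → Act),
      p x a = B * (∏ r ∈ Finset.range (∑ i, x i + busyP a), θ r) *
        (∏ i, ρ i ^ (x i) / (x i).factorial) *
        ∏ j, fac (α j) (β j) (u j) (v j) (a j))
    (c : ℕ → ℝ)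
    (hc : ∀ b, c b = ∑ a ∈ Finset.univ.filter (fun a : Fin n → Act => busyP a = b),
      ∏ j, fac (α j) (β j) (u j) (v j) (a j))
    (φ₀ : ℝ)
    (hφ₀ : φ₀ = ∑ a : Fin n → Act, ∑ xt ∈ Finset.range (m + 1 - busyP a),
      ∑ x ∈ Finset.Nat.antidiagonalTuple k xt, θ (∑ i, x i + busyP a) * p x a) :
    φ₀ = B * ∑ y ∈ Finset.range (m + 1), ∑ b ∈ Finset.range (min y n + 1),
      (∑ i, ρ i) ^ (y - b) / (y - b).factorial *
        (∏ r ∈ Finset.range (y + 1), θ r) * c b :=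
  success_probability_nonpersistent_users_general m k n θ α β u v ρ B p hp c hc φ₀ hφ₀
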